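/- Fix τ' < τ, set S' = Ψ_F(S(τ')), choose t_n ∈ I(p_n/q_n), and define G_n(z) = F_{t_n}^{∘q_n}(z) − z − p_n. If n is large enough, then for all k ≤ q_n the iterate F_{t_n}^{∘k} is defined on S' with values in HS(F), and the sequence of maps (G_n) converges uniformly to 0 on S'. -/

import Mathlib

open Filter Real Set Topology

/-- The open horizontal strip `S(τ) = {z ∈ ℂ : |Im z| < τ}`. -/
def Strip (τ : ℝ) : Set ℂ := {z : ℂ | |z.im| < τ}

/-!
In the coordinate `w` with `z = Ψ_F(w)`, `F` is the rotation `w ↦ w + θ` of `S(τ)`, and `F_t` is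
that rotation followed by `Ψ_F(w) ↦ Ψ_F(w) + t`. A univalent map has nonvanishing derivative
(otherwise it is locally a `d`-th power with `d ≥ 2`), so by compactness and `1`-periodicity the
local inverses of `Ψ_F` are uniformly Lipschitz on every smaller strip: each perturbation by `t`
moves `w` by at most `L |t|`. Hence for `k ≤ q_n` the `k`-th iterate stays within
`q_n L |t_n| ≤ L C₃ / q_n` of `w + kθ`, inside the strip, and since `|q_n θ - p_n| ≤ 1 / q_n`,
`G_n(Ψ_F(w)) = Ψ_F(w + O(1 / q_n)) - Ψ_F(w)`, which tends to `0` uniformly because `Ψ_F` is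
uniformly continuous on a smaller strip.
-/

open Metric

lemma AnalyticAt.exists_eventually_pow_eq {g : ℂ → ℂ} {z₀ : ℂ} (hg : AnalyticAt ℂ g z₀)
    (hg₀ : g z₀ ≠ 0) {d : ℕ} (hd : d ≠ 0) :
    ∃ h : ℂ → ℂ, AnalyticAt ℂ h z₀ ∧ h z₀ ≠ 0 ∧ ∀ᶠ z in 𝓝 z₀, h z ^ d = g z := by
  obtain ⟨c, hc⟩ := IsAlgClosed.exists_pow_nat_eq (g z₀) (Nat.pos_of_ne_zero hd)
  have hc₀ : c ≠ 0 := by rintro rfl; exact hg₀ (by rw [← hc, zero_pow hd])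
  refine ⟨fun z => c * Complex.exp (Complex.log (g z / g z₀) / d), ?_, by simp [hc₀], ?_⟩
  · exact analyticAt_const.mul
      ((hg.div_const.clog (by simp [hg₀])).div_const).cexp
  · filter_upwards [hg.continuousAt.eventually_ne hg₀] with z hz
    rw [mul_pow, ← Complex.exp_nat_mul, mul_div_cancel₀ _ (Nat.cast_ne_zero.2 hd),
      Complex.exp_log (div_ne_zero hz hg₀), hc, mul_div_cancel₀ _ hg₀]

lemma not_injOn_of_eventually_eq_add_pow {f φ : ℂ → ℂ} {z₀ c : ℂ} {d : ℕ} (hd : 2 ≤ d)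
    (hφ : HasStrictDerivAt φ c z₀) (hc : c ≠ 0) (hφ₀ : φ z₀ = 0)
    (hfφ : ∀ᶠ z in 𝓝 z₀, f z = f z₀ + φ z ^ d) {V : Set ℂ} (hV : V ∈ 𝓝 z₀) :
    ¬ InjOn f V := by
  intro hinj
  set W := V ∩ {z | f z = f z₀ + φ z ^ d}
  have hW : φ '' W ∈ 𝓝 0 := by
    rw [← hφ₀, ← hφ.map_nhds_eq hc]
    exact image_mem_map (inter_mem hV hfφ)
  have hζ := Complex.isPrimitiveRoot_exp d (by omega)
  set ζ := Complex.exp (2 * π * Complex.I / d)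
  have hζW : ∀ᶠ v in 𝓝 (0 : ℂ), ζ * v ∈ φ '' W :=
    ((continuous_const_mul ζ).tendsto' 0 0 (mul_zero ζ)) hW
  -- two points with `φ z₂ = ζ * φ z₁ ≠ 0` have the same image under `f`
  obtain ⟨v, hv₀, ⟨z₁, hz₁, rfl⟩, z₂, hz₂, hz₂v⟩ :=
    ((eventually_mem_nhdsWithin (s := {0}ᶜ)).and
      (eventually_nhdsWithin_of_eventually_nhds (Filter.Eventually.and hW hζW))).exists
  have hz : z₂ = z₁ := hinj hz₂.1 hz₁.1 <| by
    rw [hz₂.2, hz₁.2, hz₂v, mul_pow, hζ.pow_eq_one, one_mul]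
  subst hz
  have : (ζ - 1) * φ z₂ = 0 := by linear_combination -hz₂v
  rcases mul_eq_zero.1 this with h | h
  · exact hζ.ne_one (by omega) (sub_eq_zero.1 h)
  · exact hv₀ h

theorem deriv_ne_zero_of_injOn {f : ℂ → ℂ} {U : Set ℂ} (hU : IsOpen U)
    (hf : DifferentiableOn ℂ f U) (hinj : InjOn f U) {z₀ : ℂ} (hz₀ : z₀ ∈ U) :
    deriv f z₀ ≠ 0 := by
  intro hderiv
  have hA : AnalyticAt ℂ f z₀ := hf.analyticAt (hU.mem_nhds hz₀)
  have hfin : analyticOrderAt (f · - f z₀) z₀ ≠ ⊤ := by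
    intro htop
    rw [analyticOrderAt_eq_top] at htop
    obtain ⟨z, hne, hzU, hz⟩ := ((eventually_mem_nhdsWithin (s := {z₀}ᶜ)).and
      (eventually_nhdsWithin_of_eventually_nhds
        (Filter.Eventually.and (hU.mem_nhds hz₀) htop))).exists
    exact hne (hinj hzU hz₀ (sub_eq_zero.1 hz))
  obtain ⟨d, hd⟩ := ENat.ne_top_iff_exists.1 hfin
  have hd₂ : 2 ≤ d := by
    have h₁ : analyticOrderAt (deriv f) z₀ ≠ 0 :=
      analyticOrderAt_ne_zero.2 ⟨hA.deriv, hderiv⟩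
    have h₂ := hA.analyticOrderAt_deriv_add_one
    rw [← hd] at h₂
    have : (2 : ℕ∞) ≤ d := by
      rw [← h₂, show (2 : ℕ∞) = 1 + 1 from rfl]
      gcongr
      exact Order.one_le_iff_ne_zero.2 h₁
    exact_mod_cast this
  obtain ⟨g, hg, hg₀, hfg⟩ := ((hA.sub analyticAt_const).analyticOrderAt_eq_natCast).1 hd.symm
  obtain ⟨h, hh, hh₀, hpow⟩ := hg.exists_eventually_pow_eq hg₀ (d := d) (by omega)
  have hφ : HasStrictDerivAt (fun z => (z - z₀) * h z) (h z₀) z₀ := by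
    have hlin : HasStrictDerivAt (fun z : ℂ => z - z₀) 1 z₀ := by
      have := (hasStrictDerivAt_id z₀).fun_sub (hasStrictDerivAt_const z₀ z₀)
      rwa [sub_zero] at this
    have := hlin.fun_mul hh.hasStrictDerivAt
    rw [one_mul, sub_self, zero_mul, add_zero] at this
    exact this
  refine not_injOn_of_eventually_eq_add_pow hd₂ hφ hh₀ (by simp) ?_ (hU.mem_nhds hz₀) hinj
  filter_upwards [hfg, hpow] with z h₁ h₂
  rw [mul_pow, h₂, ← smul_eq_mul, ← h₁, Pi.sub_apply, add_sub_cancel]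

lemma Convex.mul_norm_sub_le_norm_sub_of_norm_deriv_sub_le {f : ℂ → ℂ} {s : Set ℂ}
    (hs : Convex ℝ s) (hf : ∀ x ∈ s, DifferentiableAt ℂ f x) {w : ℂ} (hw : w ∈ s) {ε : ℝ}
    (hd : ∀ x ∈ s, ‖deriv f x - deriv f w‖ ≤ ε) {z : ℂ} (hz : z ∈ s) :
    (‖deriv f w‖ - ε) * ‖z - w‖ ≤ ‖f z - f w‖ := by
  have hlin : ∀ x ∈ s, HasDerivWithinAt (fun y => f y - deriv f w * y)
      (deriv f x - deriv f w) s x := fun x hx =>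
    ((hf x hx).hasDerivAt.sub ((hasDerivAt_id x).const_mul _)).hasDerivWithinAt.congr_deriv
      (by simp)
  have htaylor := hs.norm_image_sub_le_of_norm_hasDerivWithin_le hlin hd hw hz
  have htri := norm_sub_le (f z - f w) ((f z - deriv f w * z) - (f w - deriv f w * w))
  rw [show f z - f w - ((f z - deriv f w * z) - (f w - deriv f w * w)) = deriv f w * (z - w)
    by ring, norm_mul] at htri
  linarith [sub_mul ‖deriv f w‖ ε ‖z - w‖]

/-- On the ball `f` moves points away from `f w` at rate `≥ m / 2`, so the open mapping estimate
`DiffContOnCl.ball_subset_image_closedBall` applies on the ball of radius `8 ‖u‖ / m`. -/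
lemma exists_eq_add_of_norm_deriv_sub_le {f : ℂ → ℂ} {w : ℂ} {ρ m : ℝ} (hm : 0 < m)
    (hf : ∀ x ∈ closedBall w ρ, DifferentiableAt ℂ f x) (hw : m ≤ ‖deriv f w‖)
    (hd : ∀ x ∈ closedBall w ρ, ‖deriv f x - deriv f w‖ ≤ m / 2) {u : ℂ}
    (hu : ‖u‖ ≤ m * ρ / 8) : ∃ z, ‖z - w‖ ≤ 8 / m * ‖u‖ ∧ f z = f w + u := by
  rcases eq_or_ne u 0 with rfl | hu₀
  · exact ⟨w, by simp, by simp⟩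
  set r := 8 / m * ‖u‖
  have hr : 0 < r := by positivity
  have hrρ : r ≤ ρ := by
    calc r ≤ 8 / m * (m * ρ / 8) := mul_le_mul_of_nonneg_left hu (by positivity)
      _ = ρ := by field_simp
  have hsub : closedBall w r ⊆ closedBall w ρ := closedBall_subset_closedBall hrρ
  have hlower : ∀ z ∈ closedBall w r, m / 2 * ‖z - w‖ ≤ ‖f z - f w‖ := fun z hz =>
    le_trans (by gcongr; linarith)
      ((convex_closedBall w r).mul_norm_sub_le_norm_sub_of_norm_deriv_sub_le
        (fun x hx => hf x (hsub hx)) (mem_closedBall_self hr.le) (fun x hx => hd x (hsub hx)) hz)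
  have hcont : DiffContOnCl ℂ f (ball w r) := DifferentiableOn.diffContOnCl <| by
    rw [closure_ball w hr.ne']
    exact fun x hx => (hf x (hsub hx)).differentiableWithinAt
  have hsphere : ∀ z ∈ sphere w r, m / 2 * r ≤ ‖f z - f w‖ := fun z hz => by
    simpa [← dist_eq_norm, mem_sphere.1 hz] using hlower z (sphere_subset_closedBall hz)
  have hfreq : ∃ᶠ z in 𝓝 w, f z ≠ f w := by
    have : ∀ᶠ z in 𝓝[≠] w, f z ≠ f w := by
      filter_upwards [eventually_mem_nhdsWithin,
        eventually_nhdsWithin_of_eventually_nhds (closedBall_mem_nhds w hr)] with z hzw hz heq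
      have := hlower z hz
      rw [heq, sub_self, norm_zero] at this
      exact hzw (sub_eq_zero.1 (norm_eq_zero.1 (by nlinarith [norm_nonneg (z - w)])))
    exact this.frequently.filter_mono nhdsWithin_le_nhds
  have hmem : f w + u ∈ ball (f w) (m / 2 * r / 2) := by
    rw [mem_ball_iff_norm, add_sub_cancel_left]
    have : m / 2 * r / 2 = 2 * ‖u‖ := by simp only [r]; field_simp; ring
    rw [this]
    linarith [norm_pos_iff.2 hu₀]
  obtain ⟨z, hz, hfz⟩ := hcont.ball_subset_image_closedBall hr hsphere hfreq hmem
  exact ⟨z, mem_closedBall_iff_norm.1 hz, hfz⟩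

theorem IsCompact.exists_forall_exists_eq_add {f : ℂ → ℂ} {U K : Set ℂ} (hK : IsCompact K)
    (hU : IsOpen U) (hKU : K ⊆ U) (hf : DifferentiableOn ℂ f U) (hinj : InjOn f U) :
    ∃ δ > 0, ∃ L > 0, ∀ w ∈ K, ∀ u : ℂ, ‖u‖ ≤ δ →
      ∃ z ∈ U, ‖z - w‖ ≤ L * ‖u‖ ∧ f z = f w + u := by
  obtain ⟨r, hr, hrU⟩ := hK.exists_cthickening_subset_open hU hKU
  have hderiv : ContinuousOn (deriv f) U := (hf.analyticOnNhd hU).deriv.continuousOn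
  obtain ⟨m, hm, hmK⟩ := hK.exists_forall_le' (hderiv.norm.mono hKU)
    fun w hw => norm_pos_iff.2 (deriv_ne_zero_of_injOn hU hf hinj (hKU hw))
  obtain ⟨η, hη, hUC⟩ := Metric.uniformContinuousOn_iff.1
    ((hK.cthickening).uniformContinuousOn_of_continuous (hderiv.mono hrU)) (m / 2) (by positivity)
  set ρ := min r (η / 2)
  refine ⟨m * ρ / 8, by positivity, 8 / m, by positivity, fun w hw u hu => ?_⟩
  have hball : closedBall w ρ ⊆ cthickening r K :=
    (closedBall_subset_cthickening hw ρ).trans (cthickening_mono (min_le_left _ _) K)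
  have hclose : ∀ x ∈ closedBall w ρ, ‖deriv f x - deriv f w‖ ≤ m / 2 := fun x hx =>
    dist_eq_norm (deriv f x) (deriv f w) ▸ (hUC x (hball hx) w (self_subset_cthickening K hw)
      ((mem_closedBall.1 hx).trans_lt ((min_le_right _ _).trans_lt (half_lt_self hη)))).le
  obtain ⟨z, hz, hfz⟩ := exists_eq_add_of_norm_deriv_sub_le hm
    (fun x hx => hf.differentiableAt (hU.mem_nhds (hrU (hball hx)))) (hmK w hw) hclose hu
  have hzρ : z ∈ closedBall w ρ := mem_closedBall_iff_norm.2 <| hz.trans <| by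
    calc 8 / m * ‖u‖ ≤ 8 / m * (m * ρ / 8) := by gcongr
      _ = ρ := by field_simp
  exact ⟨z, hrU (hball hzρ), hz, hfz⟩

lemma isOpen_strip (τ : ℝ) : IsOpen (Strip τ) :=
  isOpen_lt (continuous_abs.comp Complex.continuous_im) continuous_const

lemma strip_mono {a b : ℝ} (hab : a ≤ b) : Strip a ⊆ Strip b :=
  fun _ hz => lt_of_lt_of_le hz hab

@[simp] lemma add_intCast_mem_strip_iff {τ : ℝ} {z : ℂ} {k : ℤ} :
    z + k ∈ Strip τ ↔ z ∈ Strip τ := by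
  simp [Strip]

@[simp] lemma sub_intCast_mem_strip_iff {τ : ℝ} {z : ℂ} {k : ℤ} :
    z - k ∈ Strip τ ↔ z ∈ Strip τ := by
  simp [Strip]

@[simp] lemma add_ofReal_mem_strip_iff {τ : ℝ} {z : ℂ} {r : ℝ} :
    z + r ∈ Strip τ ↔ z ∈ Strip τ := by
  simp [Strip]

lemma abs_im_le_abs_im_add_norm_sub (z w : ℂ) (r : ℝ) : |w.im| ≤ |z.im| + ‖w - (z + r)‖ := by
  have h := Complex.abs_im_le_norm (w - (z + r))
  simp only [Complex.sub_im, Complex.add_im, Complex.ofReal_im, add_zero] at h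
  linarith [abs_sub_abs_le_abs_sub w.im z.im]

lemma exists_intCast_sub_mem_reProdIm {a : ℝ} {w : ℂ} (hw : |w.im| ≤ a) :
    ∃ k : ℤ, w - k ∈ Icc (0 : ℝ) 1 ×ℂ Icc (-a) a := by
  refine ⟨⌊w.re⌋, Complex.mem_reProdIm.2 ⟨?_, ?_⟩⟩
  · simp only [Complex.sub_re, Complex.intCast_re, mem_Icc, sub_nonneg]
    exact ⟨Int.floor_le _, by linarith [Int.lt_floor_add_one w.re]⟩
  · simpa [abs_le] using hw

section Periodic

variable {Ψ : ℂ → ℂ} {τ : ℝ}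

lemma map_add_intCast_of_map_add_one (hΨper : ∀ z ∈ Strip τ, Ψ (z + 1) = Ψ z + 1) (k : ℤ)
    {z : ℂ} (hz : z ∈ Strip τ) : Ψ (z + k) = Ψ z + k := by
  induction k using Int.induction_on with
  | zero => simp
  | succ n ih =>
    have h := hΨper (z + n) (add_intCast_mem_strip_iff.2 hz)
    push_cast at h ih ⊢
    rw [← add_assoc, h, ih]
    ring
  | pred n ih =>
    have h := hΨper (z + (-n - 1 : ℤ)) (add_intCast_mem_strip_iff.2 hz)
    push_cast at h ih ⊢
    rw [show z + (-n - 1) + 1 = z + -n by ring, ih] at h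
    linear_combination -h

lemma map_eq_map_sub_intCast_add (hΨper : ∀ z ∈ Strip τ, Ψ (z + 1) = Ψ z + 1) (k : ℤ)
    {z : ℂ} (hz : z ∈ Strip τ) : Ψ z = Ψ (z - k) + k := by
  simpa using map_add_intCast_of_map_add_one hΨper k (z := z - k) (by simpa using hz)

theorem exists_forall_mem_strip_exists_eq_add {a : ℝ} (ha : a < τ)
    (hΨdiff : DifferentiableOn ℂ Ψ (Strip τ)) (hΨinj : InjOn Ψ (Strip τ))
    (hΨper : ∀ z ∈ Strip τ, Ψ (z + 1) = Ψ z + 1) :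
    ∃ δ > 0, ∃ L > 0, ∀ w ∈ Strip a, ∀ u : ℂ, ‖u‖ ≤ δ →
      ∃ z, ‖z - w‖ ≤ L * ‖u‖ ∧ Ψ z = Ψ w + u := by
  have hK : Icc (0 : ℝ) 1 ×ℂ Icc (-a) a ⊆ Strip τ := fun z hz =>
    (abs_le.2 (Complex.mem_reProdIm.1 hz).2).trans_lt ha
  obtain ⟨δ, hδ, L, hL, hpre⟩ :=
    (isCompact_Icc.reProdIm isCompact_Icc).exists_forall_exists_eq_add (isOpen_strip τ) hK
      hΨdiff hΨinj
  refine ⟨δ, hδ, L, hL, fun w hw u hu => ?_⟩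
  obtain ⟨k, hk⟩ := exists_intCast_sub_mem_reProdIm hw.le
  obtain ⟨z, hz, hzw, hΨz⟩ := hpre _ hk u hu
  refine ⟨z + k, by convert hzw using 2; ring, ?_⟩
  rw [map_add_intCast_of_map_add_one hΨper k hz, hΨz,
    map_eq_map_sub_intCast_add hΨper k (strip_mono ha.le hw)]
  ring

theorem uniformContinuousOn_strip {a : ℝ} (ha : a < τ) (hΨ : ContinuousOn Ψ (Strip τ))
    (hΨper : ∀ z ∈ Strip τ, Ψ (z + 1) = Ψ z + 1) : UniformContinuousOn Ψ (Strip a) := by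
  have hK : Icc (-1 : ℝ) 2 ×ℂ Icc (-a) a ⊆ Strip τ := fun z hz =>
    (abs_le.2 (Complex.mem_reProdIm.1 hz).2).trans_lt ha
  have hUC := Metric.uniformContinuousOn_iff.1
    ((isCompact_Icc.reProdIm isCompact_Icc).uniformContinuousOn_of_continuous (hΨ.mono hK))
  refine Metric.uniformContinuousOn_iff.2 fun ε hε => ?_
  obtain ⟨η, hη, hΨη⟩ := hUC ε hε
  refine ⟨min η 1, by positivity, fun z hz w hw hzw => ?_⟩
  obtain ⟨k, hk⟩ := exists_intCast_sub_mem_reProdIm hw.le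
  have hshift : dist (z - k) (w - k) = dist z w := dist_sub_right z w _
  have hzk : z - k ∈ Icc (-1 : ℝ) 2 ×ℂ Icc (-a) a := by
    have hre := (Complex.abs_re_le_norm (z - w)).trans_lt
      ((dist_eq_norm z w ▸ hzw).trans_le (min_le_right η 1))
    simp only [Complex.mem_reProdIm, Complex.sub_re, Complex.intCast_re, mem_Icc,
      Complex.sub_im, Complex.intCast_im, sub_zero] at hk hre ⊢
    refine ⟨⟨?_, ?_⟩, abs_le.1 hz.le⟩ <;> linarith [(abs_lt.1 hre).1, (abs_lt.1 hre).2]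
  have hwk : w - k ∈ Icc (-1 : ℝ) 2 ×ℂ Icc (-a) a :=
    Complex.mem_reProdIm.2
      ⟨Icc_subset_Icc (by norm_num) (by norm_num) (Complex.mem_reProdIm.1 hk).1,
        (Complex.mem_reProdIm.1 hk).2⟩
  rw [map_eq_map_sub_intCast_add hΨper k (strip_mono ha.le hz),
    map_eq_map_sub_intCast_add hΨper k (strip_mono ha.le hw), dist_add_right]
  exact hΨη _ hzk _ hwk (hshift ▸ hzw.trans_le (min_le_left η 1))

end Periodic

section Dynamics

variable {Ψ Fc : ℂ → ℂ} {θ τ : ℝ}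

theorem exists_shadow_iterate {a δ L : ℝ} (haτ : a ≤ τ) (hL : 0 ≤ L)
    (hFc : ∀ z ∈ Strip τ, Fc (Ψ z) = Ψ (z + θ))
    (hpre : ∀ w ∈ Strip a, ∀ u : ℂ, ‖u‖ ≤ δ → ∃ z, ‖z - w‖ ≤ L * ‖u‖ ∧ Ψ z = Ψ w + u)
    {s : ℝ} (hs : |s| ≤ δ) (k : ℕ) {z : ℂ} (hz : |z.im| + k * (L * |s|) < a) :
    ∃ ζ, Ψ ζ = (fun y => Fc y + s)^[k] (Ψ z) ∧ ‖ζ - (z + ↑(k * θ))‖ ≤ k * (L * |s|) := by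
  induction k with
  | zero => exact ⟨z, by simp, by simp⟩
  | succ k ih =>
    have hstep : 0 ≤ L * |s| := by positivity
    obtain ⟨ζ, hΨζ, hdist⟩ := ih (by push_cast at hz; linarith)
    have hζ : ζ ∈ Strip a := by
      have := abs_im_le_abs_im_add_norm_sub z ζ (k * θ)
      push_cast at hz
      exact show |ζ.im| < a by linarith
    obtain ⟨ζ', hdist', hζ'⟩ := hpre _ (add_ofReal_mem_strip_iff.2 hζ) s (by simpa using hs)
    refine ⟨ζ', ?_, ?_⟩
    · rw [Function.iterate_succ_apply', ← hΨζ, hFc ζ (strip_mono haτ hζ), hζ']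
    · calc ‖ζ' - (z + ↑((k + 1 : ℕ) * θ))‖ = ‖(ζ' - (ζ + θ)) + (ζ - (z + ↑(k * θ)))‖ := by
            push_cast; ring_nf
        _ ≤ L * |s| + k * (L * |s|) := norm_add_le_of_le (by simpa using hdist') hdist
        _ = (k + 1 : ℕ) * (L * |s|) := by push_cast; ring

theorem eventually_exists_shadow_iterate {τ' : ℝ} (hτ' : τ' < τ)
    (hΨdiff : DifferentiableOn ℂ Ψ (Strip τ)) (hΨinj : InjOn Ψ (Strip τ))
    (hΨper : ∀ z ∈ Strip τ, Ψ (z + 1) = Ψ z + 1) (hFc : ∀ z ∈ Strip τ, Fc (Ψ z) = Ψ (z + θ))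
    {t : ℕ → ℝ} {q : ℕ → ℕ} (ht : Tendsto t atTop (𝓝 0))
    (hqt : Tendsto (fun n => q n * t n) atTop (𝓝 0)) {η : ℝ} (hη : 0 < η) :
    ∀ᶠ n in atTop, ∀ k ≤ q n, ∀ z ∈ Strip τ', ∃ ζ,
      Ψ ζ = (fun y => Fc y + t n)^[k] (Ψ z) ∧ ‖ζ - (z + ↑(k * θ))‖ < η := by
  obtain ⟨a, hτ'a, haτ⟩ := exists_between hτ'
  obtain ⟨δ, hδ, L, hL, hpre⟩ := exists_forall_mem_strip_exists_eq_add haτ hΨdiff hΨinj hΨper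
  set c := min η (a - τ')
  have hc : 0 < c := lt_min hη (by linarith)
  have hsmall : ∀ᶠ n in atTop, |t n| ≤ δ := by
    filter_upwards [ht.eventually (closedBall_mem_nhds 0 hδ)] with n hn
    simpa using hn
  have hqsmall : ∀ᶠ n in atTop, q n * (L * |t n|) < c := by
    filter_upwards [(hqt.norm.const_mul L).eventually_lt_const (by simpa using hc)] with n hn
    simpa [abs_mul, mul_left_comm] using hn
  filter_upwards [hsmall, hqsmall] with n hn hqn k hk z hz
  have hkq : k * (L * |t n|) ≤ q n * (L * |t n|) := by gcongr
  obtain ⟨ζ, hζ, hdist⟩ := exists_shadow_iterate haτ.le hL.le hFc hpre hn k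
    (by linarith [show |z.im| < τ' from hz, min_le_right η (a - τ')])
  exact ⟨ζ, hζ, by linarith [min_le_left η (a - τ')]⟩

theorem eventually_mapsTo_iterate {τ' : ℝ} (hτ' : τ' < τ)
    (hΨdiff : DifferentiableOn ℂ Ψ (Strip τ)) (hΨinj : InjOn Ψ (Strip τ))
    (hΨper : ∀ z ∈ Strip τ, Ψ (z + 1) = Ψ z + 1) (hFc : ∀ z ∈ Strip τ, Fc (Ψ z) = Ψ (z + θ))
    {t : ℕ → ℝ} {q : ℕ → ℕ} (ht : Tendsto t atTop (𝓝 0))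
    (hqt : Tendsto (fun n => q n * t n) atTop (𝓝 0)) :
    ∀ᶠ n in atTop, ∀ k ≤ q n,
      MapsTo (fun z => Fc z + t n)^[k] (Ψ '' Strip τ') (Ψ '' Strip τ) := by
  filter_upwards [eventually_exists_shadow_iterate hτ' hΨdiff hΨinj hΨper hFc ht hqt
    (sub_pos.2 hτ')] with n hn k hk
  rintro _ ⟨z, hz, rfl⟩
  obtain ⟨ζ, hζ, hdist⟩ := hn k hk z hz
  have := abs_im_le_abs_im_add_norm_sub z ζ (k * θ)
  exact ⟨ζ, show |ζ.im| < τ by linarith [show |z.im| < τ' from hz], hζ⟩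

theorem tendstoUniformlyOn_iterate_sub_sub {τ' : ℝ} (hτ' : τ' < τ)
    (hΨdiff : DifferentiableOn ℂ Ψ (Strip τ)) (hΨinj : InjOn Ψ (Strip τ))
    (hΨper : ∀ z ∈ Strip τ, Ψ (z + 1) = Ψ z + 1) (hFc : ∀ z ∈ Strip τ, Fc (Ψ z) = Ψ (z + θ))
    {t : ℕ → ℝ} {q : ℕ → ℕ} {p : ℕ → ℤ} (ht : Tendsto t atTop (𝓝 0))
    (hqt : Tendsto (fun n => q n * t n) atTop (𝓝 0))
    (hp : Tendsto (fun n => q n * θ - p n) atTop (𝓝 0)) :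
    TendstoUniformlyOn (fun n z => (fun z => Fc z + t n)^[q n] z - z - p n) (fun _ => 0) atTop
      (Ψ '' Strip τ') := by
  obtain ⟨a, hτ'a, haτ⟩ := exists_between hτ'
  rw [Metric.tendstoUniformlyOn_iff]
  intro ε hε
  obtain ⟨η, hη, hΨη⟩ := Metric.uniformContinuousOn_iff.1
    (uniformContinuousOn_strip haτ hΨdiff.continuousOn hΨper) ε hε
  set c := min (η / 2) (a - τ')
  have hc : 0 < c := lt_min (by positivity) (by linarith)
  filter_upwards [eventually_exists_shadow_iterate hτ' hΨdiff hΨinj hΨper hFc ht hqt hc,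
    hp.eventually (ball_mem_nhds 0 hc)] with n hn hpn
  rintro _ ⟨z, hz, rfl⟩
  obtain ⟨ζ, hζ, hdist⟩ := hn (q n) le_rfl z hz
  have hpn' : ‖((q n * θ - p n : ℝ) : ℂ)‖ < c := by
    rw [Complex.norm_real, ← dist_zero_right]
    exact hpn
  have hζa : ζ - p n ∈ Strip a := by
    have := abs_im_le_abs_im_add_norm_sub z ζ (q n * θ)
    refine sub_intCast_mem_strip_iff.2 (show |ζ.im| < a by
      linarith [show |z.im| < τ' from hz, min_le_right (η / 2) (a - τ')])
  have hclose : dist (ζ - p n) z < η := by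
    rw [dist_eq_norm]
    calc ‖ζ - p n - z‖ = ‖(ζ - (z + ↑(q n * θ))) + ((q n * θ - p n : ℝ) : ℂ)‖ := by
          push_cast; ring_nf
      _ < c + c := (norm_add_le _ _).trans_lt (add_lt_add hdist hpn')
      _ ≤ η := by linarith [min_le_left (η / 2) (a - τ')]
  rw [← hζ, map_eq_map_sub_intCast_add hΨper (p n)
    (strip_mono haτ.le (sub_intCast_mem_strip_iff.1 hζa)), dist_comm,
    dist_zero_right, show Ψ (ζ - p n) + p n - Ψ z - p n = Ψ (ζ - p n) - Ψ z by ring,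
    ← dist_eq_norm]
  exact hΨη _ hζa _ (strip_mono hτ'a.le hz) hclose

end Dynamics

theorem iterates_defined_on_substrip_and_Gn_tendsto_zero_general
    (θ : ℝ)
    -- Herman strip of modulus `2τ`
    (τ : ℝ)
    (Ψ : ℂ → ℂ)
    (hΨdiff : DifferentiableOn ℂ Ψ (Strip τ))
    (hΨinj : Set.InjOn Ψ (Strip τ))
    (hΨper : ∀ z ∈ Strip τ, Ψ (z + 1) = Ψ z + 1)
    (Fc : ℂ → ℂ)
    (hFclin : ∀ z ∈ Strip τ, Fc (Ψ z) = Ψ (z + (θ : ℂ)))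
    -- `0 < τ' < τ`
    (τ' : ℝ) (hτ'τ : τ' < τ)
    -- continued fraction convergents `p_n/q_n` of `θ`
    (pn : ℕ → ℤ) (qn : ℕ → ℕ)
    (hqpos : ∀ n, 0 < qn n)
    (hqtend : Tendsto qn atTop atTop)
    (hconv : ∀ n, |θ - (pn n : ℝ) / (qn n : ℝ)| ≤ 1 / (qn n : ℝ) ^ 2)
    -- parameters `t_n ∈ I(p_n/q_n)`, with the bound coming from Herman's theorem
    (t : ℕ → ℝ)
    (C₃ : ℝ) (hC₃ : 0 < C₃)
    (htbound : ∀ n, |t n| ≤ C₃ * |θ - (pn n : ℝ) / (qn n : ℝ)|) :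
    (∃ N : ℕ, ∀ n ≥ N, ∀ k ≤ qn n,
      Set.MapsTo ((fun z : ℂ => Fc z + ((t n : ℝ) : ℂ))^[k])
        (Ψ '' Strip τ') (Ψ '' Strip τ))
    ∧ TendstoUniformlyOn
        (fun n z => (fun z : ℂ => Fc z + ((t n : ℝ) : ℂ))^[qn n] z - z - ((pn n : ℤ) : ℂ))
        (fun _ => 0) atTop (Ψ '' Strip τ') := by
  have hq : ∀ n, (1 : ℝ) ≤ qn n := fun n => Nat.one_le_cast.2 (hqpos n)
  have hdiv : ∀ {u : ℕ → ℝ} (C : ℝ), (∀ n, |u n| ≤ C / qn n) → Tendsto u atTop (𝓝 0) :=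
    fun C hu => squeeze_zero_norm hu
      (tendsto_const_nhds.div_atTop (tendsto_natCast_atTop_atTop.comp hqtend))
  have hpq : ∀ n, |qn n * θ - pn n| ≤ 1 / qn n := fun n => by
    have hq0 : (0 : ℝ) < qn n := by linarith [hq n]
    rw [show (qn n : ℝ) * θ - pn n = qn n * (θ - pn n / qn n) by field_simp, abs_mul,
      abs_of_pos hq0]
    calc (qn n : ℝ) * |θ - pn n / qn n| ≤ qn n * (1 / (qn n : ℝ) ^ 2) := by gcongr; exact hconv n
      _ = 1 / qn n := by field_simp
  have hqt : ∀ n, |qn n * t n| ≤ C₃ / qn n := fun n => by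
    have hq0 : (0 : ℝ) < qn n := by linarith [hq n]
    rw [abs_mul, Nat.abs_cast, ← le_div_iff₀' hq0, div_div, ← sq]
    calc |t n| ≤ C₃ * (1 / (qn n : ℝ) ^ 2) := (htbound n).trans (by gcongr; exact hconv n)
      _ = C₃ / qn n ^ 2 := by ring
  have ht : ∀ n, |t n| ≤ C₃ / qn n := fun n =>
    (le_mul_of_one_le_left (abs_nonneg _) (hq n)).trans (by simpa [abs_mul] using hqt n)
  have ht0 := hdiv C₃ ht
  have hqt0 := hdiv C₃ hqt
  exact ⟨eventually_atTop.1 (eventually_mapsTo_iterate hτ'τ hΨdiff hΨinj hΨper hFclin ht0 hqt0),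
    tendstoUniformlyOn_iterate_sub_sub hτ'τ hΨdiff hΨinj hΨper hFclin ht0 hqt0
      (hdiv 1 hpq)⟩

/-- Proposition 1 of the paper: with `t_n ∈ I(p_n/q_n)` and
`G_n(z) = F_{t_n}^{∘q_n}(z) - z - p_n`, for `n` large enough the iterates
`F_{t_n}^{∘k}`, `k ≤ q_n`, are defined on `S' = Ψ_F(S(τ'))` with values in the
Herman strip `HS(F) = Ψ_F(S(τ))`, and `G_n → 0` uniformly on `S'`. -/
theorem iterates_defined_on_substrip_and_Gn_tendsto_zero
    (F : ℝ → ℝ)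
    (hFanal : ∀ x : ℝ, AnalyticAt ℝ F x)
    (hFmono : StrictMono F)
    (hFbij : Function.Bijective F)
    (hFderiv : ∀ x : ℝ, 0 < deriv F x)
    (hFper : ∀ x : ℝ, F (x + 1) = F x + 1)
    -- translation numbers of the translated family `F_t = F + t`
    (T : ℝ → ℝ)
    (hT : ∀ t x : ℝ, Tendsto (fun n : ℕ => ((fun y => F y + t)^[n] x - x) / n)
      atTop (𝓝 (T t)))
    (θ : ℝ) (hθ : T 0 = θ) (hirr : Irrational θ)
    -- Herman strip of modulus `2τ`
    (τ : ℝ) (hτ : 0 < τ)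
    (Φ : ℝ → ℝ) (hΦmono : StrictMono Φ)
    (hΦper : ∀ x : ℝ, Φ (x + 1) = Φ x + 1)
    (hΦconj : ∀ x : ℝ, Φ (F x) = Φ x + θ)
    (Ψ : ℂ → ℂ)
    (hΨΦ : ∀ x : ℝ, Ψ ((Φ x : ℝ) : ℂ) = (x : ℂ))
    (hΨdiff : DifferentiableOn ℂ Ψ (Strip τ))
    (hΨinj : Set.InjOn Ψ (Strip τ))
    (hΨper : ∀ z ∈ Strip τ, Ψ (z + 1) = Ψ z + 1)
    (Fc : ℂ → ℂ)
    (hFcreal : ∀ x : ℝ, Fc (x : ℂ) = ((F x : ℝ) : ℂ))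
    (hFcdiff : DifferentiableOn ℂ Fc (Ψ '' Strip τ))
    (hFcper : ∀ z ∈ Ψ '' Strip τ, Fc (z + 1) = Fc z + 1)
    (hFclin : ∀ z ∈ Strip τ, Fc (Ψ z) = Ψ (z + (θ : ℂ)))
    -- `0 < τ' < τ`
    (τ' : ℝ) (hτ'pos : 0 < τ') (hτ'τ : τ' < τ)
    -- continued fraction convergents `p_n/q_n` of `θ`
    (pn : ℕ → ℤ) (qn : ℕ → ℕ)
    (hqpos : ∀ n, 0 < qn n)
    (hqtend : Tendsto qn atTop atTop)
    (hcop : ∀ n, Nat.Coprime (pn n).natAbs (qn n))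
    (hconv : ∀ n, |θ - (pn n : ℝ) / (qn n : ℝ)| ≤ 1 / (qn n : ℝ) ^ 2)
    -- parameters `t_n ∈ I(p_n/q_n)`, with the bound coming from Herman's theorem
    (t : ℕ → ℝ) (ht : ∀ n, T (t n) = (pn n : ℝ) / (qn n : ℝ))
    (C₃ : ℝ) (hC₃ : 0 < C₃)
    (htbound : ∀ n, |t n| ≤ C₃ * |θ - (pn n : ℝ) / (qn n : ℝ)|) :
    (∃ N : ℕ, ∀ n ≥ N, ∀ k ≤ qn n,
      Set.MapsTo ((fun z : ℂ => Fc z + ((t n : ℝ) : ℂ))^[k])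
        (Ψ '' Strip τ') (Ψ '' Strip τ))
    ∧ TendstoUniformlyOn
        (fun n z => (fun z : ℂ => Fc z + ((t n : ℝ) : ℂ))^[qn n] z - z - ((pn n : ℤ) : ℂ))
        (fun _ => 0) atTop (Ψ '' Strip τ') :=
  iterates_defined_on_substrip_and_Gn_tendsto_zero_general θ τ Ψ hΨdiff hΨinj hΨper Fc hFclin τ'
    hτ'τ pn qn hqpos hqtend hconv t C₃ hC₃ htbound
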